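/- Let F be a field of characteristic 2 and ν, η, ω three 3-cocycles on the 6-simplex with vertex set {0,…,6}, with ω(ijkl) ≠ 0 for every 4-element subset. For each 6-element subset w ⊂ {0,…,6} (a 5-face), listed in increasing order as w = {a_0<…<a_5}, and each i ∈ {0,…,5}, let Q_i(w) be the value Q(ν,η) computed on the 5-element vertex set w∖{a_i}, and define c(w) = Σ_{0≤i<i'≤5} Q_i(w)·Q_{i'}(w) + Σ_{i even} (Q_i(w))². Then Σ_{j=0}^{6} c({0,…,6}∖{j}) = 0; that is, c is a heptagon 5-cocycle in characteristic two. -/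
import Mathlib


/-- A 3-cochain on vertex set `Fin 7` assigns a value to each (increasing)
4-tuple of vertices.  For `j : Fin 7`, the 5-face `w` opposite to `j` has
increasing vertex list `a_i = j.succAbove i` (`i : Fin 6`); removing its
`i`-th vertex leaves the 5-element vertex set with increasing list
`m ↦ j.succAbove (i.succAbove m)` (`m : Fin 5`).  `heptagonQw F ν η ω j i` is
the value `Q(ν,η) = ∑ k, (−1)^k ν(t_k)·η(t_k)/ω(t_k)` computed on that
5-element vertex set, `t_k` being its increasing 4-tuple omitting the `k`-th
element. -/
def heptagonQw (F : Type*) [Field F]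
    (ν η ω : Fin 7 → Fin 7 → Fin 7 → Fin 7 → F) (j : Fin 7) (i : Fin 6) : F :=
  ∑ k : Fin 5,
    (-1 : F) ^ (k : ℕ) *
      (ν (j.succAbove (i.succAbove (k.succAbove 0)))
          (j.succAbove (i.succAbove (k.succAbove 1)))
          (j.succAbove (i.succAbove (k.succAbove 2)))
          (j.succAbove (i.succAbove (k.succAbove 3))) *
        η (j.succAbove (i.succAbove (k.succAbove 0)))
          (j.succAbove (i.succAbove (k.succAbove 1)))
          (j.succAbove (i.succAbove (k.succAbove 2)))
          (j.succAbove (i.succAbove (k.succAbove 3))) /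
        ω (j.succAbove (i.succAbove (k.succAbove 0)))
          (j.succAbove (i.succAbove (k.succAbove 1)))
          (j.succAbove (i.succAbove (k.succAbove 2)))
          (j.succAbove (i.succAbove (k.succAbove 3))))

/-- The value `c(w)` on the 5-face opposite to `j`:
`c(w) = ∑_{i<i'} Q_i(w)·Q_{i'}(w) + ∑_{i even} Q_i(w)²`. -/
def heptagonCw (F : Type*) [Field F]
    (ν η ω : Fin 7 → Fin 7 → Fin 7 → Fin 7 → F) (j : Fin 7) : F :=
  (∑ q ∈ Finset.univ.filter (fun q : Fin 6 × Fin 6 => q.1 < q.2),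
      heptagonQw F ν η ω j q.1 * heptagonQw F ν η ω j q.2) +
    ∑ i ∈ Finset.univ.filter (fun i : Fin 6 => Even (i : ℕ)),
      (heptagonQw F ν η ω j i) ^ 2

/-- Companion index for the pairing involution on `Fin 6 × Fin 5`. -/
def invK (i : Fin 6) (k : Fin 5) : Fin 5 :=
  ⟨(if (i : ℕ) < (i.succAbove k : ℕ) then (i : ℕ) else (i : ℕ) - 1) % 5,
    Nat.mod_lt _ (by norm_num)⟩

/-- in characteristic 2, for 3-cocycles `ν`, `η`, `ω` on the
6-simplex `{0,…,6}` with `ω` nowhere vanishing, the sum of the values `c(w)`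
over the seven 5-faces `w` vanishes: `c` is a heptagon 5-cocycle. -/
theorem heptagonC_is_five_cocycle_char_two
    (F : Type*) [Field F] [CharP F 2]
    (ν η ω : Fin 7 → Fin 7 → Fin 7 → Fin 7 → F)
    (hν : ∀ i j k l m : Fin 7, i < j → j < k → k < l → l < m →
      ν j k l m - ν i k l m + ν i j l m - ν i j k m + ν i j k l = 0)
    (hη : ∀ i j k l m : Fin 7, i < j → j < k → k < l → l < m →
      η j k l m - η i k l m + η i j l m - η i j k m + η i j k l = 0)
    (hω : ∀ i j k l m : Fin 7, i < j → j < k → k < l → l < m →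
      ω j k l m - ω i k l m + ω i j l m - ω i j k m + ω i j k l = 0)
    (hnz : ∀ i j k l : Fin 7, i < j → j < k → k < l → ω i j k l ≠ 0) :
    ∑ j : Fin 7, heptagonCw F ν η ω j = 0 := by
  have h2 : (2 : F) = 0 := CharTwo.two_eq_zero
  have hneg : (-1 : F) = 1 := CharTwo.neg_eq 1
  have epair : ∀ (x y : Fin 7) (ix iy : Fin 6),
      (∀ m : Fin 5, x.succAbove (ix.succAbove m) = y.succAbove (iy.succAbove m)) →
      heptagonQw F ν η ω x ix = heptagonQw F ν η ω y iy := by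
    intro x y ix iy h
    unfold heptagonQw
    exact Finset.sum_congr rfl fun k _ => by simp only [h]
  have e1_0 : heptagonQw F ν η ω 1 0 = heptagonQw F ν η ω 0 0 := epair 1 0 0 0 (by decide)
  have e2_0 : heptagonQw F ν η ω 2 0 = heptagonQw F ν η ω 0 1 := epair 2 0 0 1 (by decide)
  have e2_1 : heptagonQw F ν η ω 2 1 = heptagonQw F ν η ω 1 1 := epair 2 1 1 1 (by decide)
  have e3_0 : heptagonQw F ν η ω 3 0 = heptagonQw F ν η ω 0 2 := epair 3 0 0 2 (by decide)
  have e3_1 : heptagonQw F ν η ω 3 1 = heptagonQw F ν η ω 1 2 := epair 3 1 1 2 (by decide)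
  have e3_2 : heptagonQw F ν η ω 3 2 = heptagonQw F ν η ω 2 2 := epair 3 2 2 2 (by decide)
  have e4_0 : heptagonQw F ν η ω 4 0 = heptagonQw F ν η ω 0 3 := epair 4 0 0 3 (by decide)
  have e4_1 : heptagonQw F ν η ω 4 1 = heptagonQw F ν η ω 1 3 := epair 4 1 1 3 (by decide)
  have e4_2 : heptagonQw F ν η ω 4 2 = heptagonQw F ν η ω 2 3 := epair 4 2 2 3 (by decide)
  have e4_3 : heptagonQw F ν η ω 4 3 = heptagonQw F ν η ω 3 3 := epair 4 3 3 3 (by decide)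
  have e5_0 : heptagonQw F ν η ω 5 0 = heptagonQw F ν η ω 0 4 := epair 5 0 0 4 (by decide)
  have e5_1 : heptagonQw F ν η ω 5 1 = heptagonQw F ν η ω 1 4 := epair 5 1 1 4 (by decide)
  have e5_2 : heptagonQw F ν η ω 5 2 = heptagonQw F ν η ω 2 4 := epair 5 2 2 4 (by decide)
  have e5_3 : heptagonQw F ν η ω 5 3 = heptagonQw F ν η ω 3 4 := epair 5 3 3 4 (by decide)
  have e5_4 : heptagonQw F ν η ω 5 4 = heptagonQw F ν η ω 4 4 := epair 5 4 4 4 (by decide)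
  have e6_0 : heptagonQw F ν η ω 6 0 = heptagonQw F ν η ω 0 5 := epair 6 0 0 5 (by decide)
  have e6_1 : heptagonQw F ν η ω 6 1 = heptagonQw F ν η ω 1 5 := epair 6 1 1 5 (by decide)
  have e6_2 : heptagonQw F ν η ω 6 2 = heptagonQw F ν η ω 2 5 := epair 6 2 2 5 (by decide)
  have e6_3 : heptagonQw F ν η ω 6 3 = heptagonQw F ν η ω 3 5 := epair 6 3 3 5 (by decide)
  have e6_4 : heptagonQw F ν η ω 6 4 = heptagonQw F ν η ω 4 5 := epair 6 4 4 5 (by decide)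
  have e6_5 : heptagonQw F ν η ω 6 5 = heptagonQw F ν η ω 5 5 := epair 6 5 5 5 (by decide)
  have hrow : ∀ j : Fin 7, ∑ i : Fin 6, heptagonQw F ν η ω j i = 0 := by
    intro j
    have hdec : ∀ (i : Fin 6) (k : Fin 5) (m : Fin 4),
        i.succAbove (k.succAbove m) = (i.succAbove k).succAbove ((invK i k).succAbove m) := by
      decide
    have hQ : ∀ i, heptagonQw F ν η ω j i = ∑ k : Fin 5,
        (ν (j.succAbove (i.succAbove (k.succAbove 0)))
          (j.succAbove (i.succAbove (k.succAbove 1)))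
          (j.succAbove (i.succAbove (k.succAbove 2)))
          (j.succAbove (i.succAbove (k.succAbove 3))) *
        η (j.succAbove (i.succAbove (k.succAbove 0)))
          (j.succAbove (i.succAbove (k.succAbove 1)))
          (j.succAbove (i.succAbove (k.succAbove 2)))
          (j.succAbove (i.succAbove (k.succAbove 3))) /
        ω (j.succAbove (i.succAbove (k.succAbove 0)))
          (j.succAbove (i.succAbove (k.succAbove 1)))
          (j.succAbove (i.succAbove (k.succAbove 2)))
          (j.succAbove (i.succAbove (k.succAbove 3)))) := by
      intro i
      unfold heptagonQw
      exact Finset.sum_congr rfl fun k _ => by rw [hneg, one_pow, one_mul]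
    simp only [hQ]
    rw [← Finset.sum_product']
    have huniv : (Finset.univ : Finset (Fin 6 × Fin 5)) = Finset.univ ×ˢ Finset.univ := by
      rw [Finset.univ_product_univ]
    rw [← huniv]
    refine Finset.sum_ninvolution (fun p => (p.1.succAbove p.2, invK p.1 p.2)) ?_ ?_
      (fun _ => Finset.mem_univ _) ?_
    · intro p
      dsimp only
      simp only [← hdec]
      rw [← two_mul, h2, zero_mul]
    · intro p _
      exact fun h => Fin.succAbove_ne p.1 p.2 (congrArg Prod.fst h)
    · intro p
      have hi1 : ∀ (i : Fin 6) (k : Fin 5), (i.succAbove k).succAbove (invK i k) = i := by decide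
      have hi2 : ∀ (i : Fin 6) (k : Fin 5), invK (i.succAbove k) (invK i k) = k := by decide
      exact Prod.ext (hi1 p.1 p.2) (hi2 p.1 p.2)
  have r0 := hrow 0
  rw [Fin.sum_univ_six] at r0
  have r1 := hrow 1
  rw [Fin.sum_univ_six, e1_0] at r1
  have r2 := hrow 2
  rw [Fin.sum_univ_six, e2_0, e2_1] at r2
  have r3 := hrow 3
  rw [Fin.sum_univ_six, e3_0, e3_1, e3_2] at r3
  have r4 := hrow 4
  rw [Fin.sum_univ_six, e4_0, e4_1, e4_2, e4_3] at r4
  have r5 := hrow 5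
  rw [Fin.sum_univ_six, e5_0, e5_1, e5_2, e5_3, e5_4] at r5
  have r6 := hrow 6
  rw [Fin.sum_univ_six, e6_0, e6_1, e6_2, e6_3, e6_4, e6_5] at r6
  rw [Fin.sum_univ_seven]
  simp only [heptagonCw]
  simp (config := { decide := true }) only [Finset.sum_filter, Fintype.sum_prod_type,
    Fin.sum_univ_six, if_true, if_false]
  rw [e1_0, e2_0, e2_1, e3_0, e3_1, e3_2, e4_0, e4_1, e4_2, e4_3, e5_0, e5_1, e5_2, e5_3, e5_4, e6_0, e6_1, e6_2, e6_3, e6_4, e6_5]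
  linear_combination
    (heptagonQw F ν η ω 0 5 + heptagonQw F ν η ω 1 5 + heptagonQw F ν η ω 2 5 + heptagonQw F ν η ω 3 5 + heptagonQw F ν η ω 4 5 + heptagonQw F ν η ω 5 5) * r0 +
    (heptagonQw F ν η ω 0 1 + heptagonQw F ν η ω 0 2 + heptagonQw F ν η ω 0 3 + heptagonQw F ν η ω 0 4 + heptagonQw F ν η ω 1 1 + heptagonQw F ν η ω 1 2 + heptagonQw F ν η ω 1 3 + heptagonQw F ν η ω 1 4 + heptagonQw F ν η ω 2 5 + heptagonQw F ν η ω 3 5 + heptagonQw F ν η ω 4 5 + heptagonQw F ν η ω 5 5) * r1 +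
    (heptagonQw F ν η ω 0 1 + heptagonQw F ν η ω 0 2 + heptagonQw F ν η ω 0 3 + heptagonQw F ν η ω 0 4 + heptagonQw F ν η ω 1 1 + heptagonQw F ν η ω 1 2 + heptagonQw F ν η ω 1 3 + heptagonQw F ν η ω 1 4 + heptagonQw F ν η ω 2 5 + heptagonQw F ν η ω 3 5 + heptagonQw F ν η ω 4 5 + heptagonQw F ν η ω 5 5) * r2 +
    (heptagonQw F ν η ω 0 3 + heptagonQw F ν η ω 0 4 + heptagonQw F ν η ω 1 3 + heptagonQw F ν η ω 1 4 + heptagonQw F ν η ω 2 3 + heptagonQw F ν η ω 2 4 + heptagonQw F ν η ω 3 3 + heptagonQw F ν η ω 3 4 + heptagonQw F ν η ω 4 5 + heptagonQw F ν η ω 5 5) * r3 +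
    (heptagonQw F ν η ω 0 3 + heptagonQw F ν η ω 0 4 + heptagonQw F ν η ω 1 3 + heptagonQw F ν η ω 1 4 + heptagonQw F ν η ω 2 3 + heptagonQw F ν η ω 2 4 + heptagonQw F ν η ω 3 3 + heptagonQw F ν η ω 3 4 + heptagonQw F ν η ω 4 5 + heptagonQw F ν η ω 5 5) * r4 +
    (heptagonQw F ν η ω 0 0 * heptagonQw F ν η ω 0 0 - heptagonQw F ν η ω 0 0 * heptagonQw F ν η ω 2 5 - heptagonQw F ν η ω 0 0 * heptagonQw F ν η ω 3 5 - heptagonQw F ν η ω 0 0 * heptagonQw F ν η ω 4 5 - heptagonQw F ν η ω 0 0 * heptagonQw F ν η ω 5 5 - heptagonQw F ν η ω 0 1 * heptagonQw F ν η ω 1 1 - heptagonQw F ν η ω 0 1 * heptagonQw F ν η ω 1 2 - heptagonQw F ν η ω 0 1 * heptagonQw F ν η ω 1 3 - heptagonQw F ν η ω 0 1 * heptagonQw F ν η ω 1 4 - heptagonQw F ν η ω 0 1 * heptagonQw F ν η ω 1 5 - heptagonQw F ν η ω 0 1 * heptagonQw F ν η ω 2 5 - heptagonQw F ν η ω 0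 1 * heptagonQw F ν η ω 3 5 - heptagonQw F ν η ω 0 1 * heptagonQw F ν η ω 4 5 - heptagonQw F ν η ω 0 1 * heptagonQw F ν η ω 5 5 + heptagonQw F ν η ω 0 2 * heptagonQw F ν η ω 0 2 - heptagonQw F ν η ω 0 2 * heptagonQw F ν η ω 1 1 - heptagonQw F ν η ω 0 2 * heptagonQw F ν η ω 1 3 - heptagonQw F ν η ω 0 2 * heptagonQw F ν η ω 1 4 - heptagonQw F ν η ω 0 2 * heptagonQw F ν η ω 1 5 - heptagonQw F ν η ω 0 2 * heptagonQw F ν η ω 2 3 - heptagonQw F ν η ω 0 2 * heptagonQw F ν η ω 2 4 - heptagonQw F ν η ω 0 2 * heptagonQw F ν η ω 2 5 - heptagonQw F ν η ω 0 2 * heptagonQw F ν η ω 4 5 - heptagonQw F ν η ω 0 2 * heptagonQw F ν η ω 5 5 - heptagonQw F ν η ω 0 3 * heptagonQw F ν η ω 1 1 - heptagonQw F ν η ω 0 3 * heptagonQw F ν η ω 1 2 - heptagonQw F ν η ω 0 3 * heptagonQw F ν η ω 1 3 - heptagonQw F ν η ω 0 3 * heptagonQw F ν η ω 1 4 - heptagonQw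 F ν η ω 0 3 * heptagonQw F ν η ω 1 5 - heptagonQw F ν η ω 0 3 * heptagonQw F ν η ω 2 2 - heptagonQw F ν η ω 0 3 * heptagonQw F ν η ω 2 3 - heptagonQw F ν η ω 0 3 * heptagonQw F ν η ω 2 4 - heptagonQw F ν η ω 0 3 * heptagonQw F ν η ω 2 5 - heptagonQw F ν η ω 0 3 * heptagonQw F ν η ω 3 3 - heptagonQw F ν η ω 0 3 * heptagonQw F ν η ω 3 4 - heptagonQw F ν η ω 0 3 * heptagonQw F ν η ω 3 5 - heptagonQw F ν η ω 0 3 * heptagonQw F ν η ω 4 5 - heptagonQw F ν η ω 0 3 * heptagonQw F ν η ω 5 5 + heptagonQw F ν η ω 0 4 * heptagonQw F ν η ω 0 4 - heptagonQw F ν η ω 0 4 * heptagonQw F ν η ω 1 1 - heptagonQw F ν η ω 0 4 * heptagonQw F ν η ω 1 2 - heptagonQw F ν η ω 0 4 * heptagonQw F ν η ω 1 3 - heptagonQw F ν η ω 0 4 * heptagonQw F ν η ω 1 5 - heptagonQw F ν η ω 0 4 * heptagonQw F ν η ω 2 2 - heptagonQw F ν η ω 0 4 * heptagonQw F ν η ω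 2 3 - heptagonQw F ν η ω 0 4 * heptagonQw F ν η ω 2 5 - heptagonQw F ν η ω 0 4 * heptagonQw F ν η ω 3 3 - heptagonQw F ν η ω 0 4 * heptagonQw F ν η ω 3 5 - heptagonQw F ν η ω 0 4 * heptagonQw F ν η ω 4 5 - heptagonQw F ν η ω 1 1 * heptagonQw F ν η ω 1 1 - heptagonQw F ν η ω 1 1 * heptagonQw F ν η ω 1 2 - heptagonQw F ν η ω 1 1 * heptagonQw F ν η ω 1 3 - heptagonQw F ν η ω 1 1 * heptagonQw F ν η ω 1 4 - heptagonQw F ν η ω 1 1 * heptagonQw F ν η ω 2 5 - heptagonQw F ν η ω 1 1 * heptagonQw F ν η ω 3 5 - heptagonQw F ν η ω 1 1 * heptagonQw F ν η ω 4 5 - heptagonQw F ν η ω 1 1 * heptagonQw F ν η ω 5 5 - heptagonQw F ν η ω 1 2 * heptagonQw F ν η ω 1 3 - heptagonQw F ν η ω 1 2 * heptagonQw F ν η ω 1 4 - heptagonQw F ν η ω 1 2 * heptagonQw F ν η ω 2 3 - heptagonQw F ν η ω 1 2 * heptagonQw F ν η ω 2 4 - heptagonQw F ν η ω 1 2 *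 heptagonQw F ν η ω 2 5 - heptagonQw F ν η ω 1 2 * heptagonQw F ν η ω 4 5 - heptagonQw F ν η ω 1 2 * heptagonQw F ν η ω 5 5 - heptagonQw F ν η ω 1 3 * heptagonQw F ν η ω 1 3 - heptagonQw F ν η ω 1 3 * heptagonQw F ν η ω 1 4 - heptagonQw F ν η ω 1 3 * heptagonQw F ν η ω 2 2 - heptagonQw F ν η ω 1 3 * heptagonQw F ν η ω 2 3 - heptagonQw F ν η ω 1 3 * heptagonQw F ν η ω 2 4 - heptagonQw F ν η ω 1 3 * heptagonQw F ν η ω 2 5 - heptagonQw F ν η ω 1 3 * heptagonQw F ν η ω 3 3 - heptagonQw F ν η ω 1 3 * heptagonQw F ν η ω 3 4 - heptagonQw F ν η ω 1 3 * heptagonQw F ν η ω 3 5 - heptagonQw F ν η ω 1 3 * heptagonQw F ν η ω 4 5 - heptagonQw F ν η ω 1 3 * heptagonQw F ν η ω 5 5 - heptagonQw F ν η ω 1 4 * heptagonQw F ν η ω 2 2 - heptagonQw F ν η ω 1 4 * heptagonQw F ν η ω 2 3 - heptagonQw F ν η ω 1 4 * heptagonQw F ν η ω 2 5 - heptagonQw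 F ν η ω 1 4 * heptagonQw F ν η ω 3 3 - heptagonQw F ν η ω 1 4 * heptagonQw F ν η ω 3 5 - heptagonQw F ν η ω 1 4 * heptagonQw F ν η ω 4 5 + heptagonQw F ν η ω 2 2 * heptagonQw F ν η ω 2 2 - heptagonQw F ν η ω 2 2 * heptagonQw F ν η ω 4 5 - heptagonQw F ν η ω 2 2 * heptagonQw F ν η ω 5 5 - heptagonQw F ν η ω 2 3 * heptagonQw F ν η ω 3 3 - heptagonQw F ν η ω 2 3 * heptagonQw F ν η ω 3 4 - heptagonQw F ν η ω 2 3 * heptagonQw F ν η ω 3 5 - heptagonQw F ν η ω 2 3 * heptagonQw F ν η ω 4 5 - heptagonQw F ν η ω 2 3 * heptagonQw F ν η ω 5 5 + heptagonQw F ν η ω 2 4 * heptagonQw F ν η ω 2 4 - heptagonQw F ν η ω 2 4 * heptagonQw F ν η ω 3 3 - heptagonQw F ν η ω 2 4 * heptagonQw F ν η ω 3 5 - heptagonQw F ν η ω 2 4 * heptagonQw F ν η ω 4 5 - heptagonQw F ν η ω 3 3 * heptagonQw F ν η ω 3 3 - heptagonQw F ν η ω 3 3 * heptagonQw F ν η ω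 3 4 - heptagonQw F ν η ω 3 3 * heptagonQw F ν η ω 4 5 - heptagonQw F ν η ω 3 3 * heptagonQw F ν η ω 5 5 - heptagonQw F ν η ω 3 4 * heptagonQw F ν η ω 4 5 + heptagonQw F ν η ω 4 4 * heptagonQw F ν η ω 4 4) * h2
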